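/- With the coherent oracle c𝔘 as defined in the context, let H := ℂ² ⊗ V ⊗ W and for 0 ≤ q ≤ N−1 let F_q ⊆ EuclideanSpace ℂ (Fin N) be the linear span of the Fourier basis vectors {k̂ : 0 ≤ k ≤ q}. Then for every 0 ≤ q ≤ N−2 and every unitary A on H, the operator (A ⊗ id) ∘ c𝔘 maps the subspace H ⊗ F_q into the subspace H ⊗ F_{q+1}. -/

import Mathlib

open scoped Kronecker

noncomputable section

/-- `ω N = exp(2πi/N)`, the primitive `N`-th root of unity. -/
def ω (N : ℕ) : ℂ := Complex.exp (2 * Real.pi * Complex.I / N)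

/-- The computational (standard) basis vector `e_y` of `EuclideanSpace ℂ (Fin N)`. -/
def e (N : ℕ) (y : Fin N) : EuclideanSpace ℂ (Fin N) := EuclideanSpace.single y 1

/-- The Fourier basis vector `k̂ = (1/√N) ∑_y ω_N^{k·y} • e_y`. -/
def fHat (N : ℕ) (k : Fin N) : EuclideanSpace ℂ (Fin N) :=
  (↑(Real.sqrt N))⁻¹ • ∑ y : Fin N, ω N ^ ((k : ℕ) * (y : ℕ)) • e N y

/-- The tensor product of two Euclidean vectors, realized concretely:
`(x ⊗ z) (i, j) = x i * z j`. -/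
def tp {ι κ : Type*} [Fintype ι] [Fintype κ]
    (x : EuclideanSpace ℂ ι) (z : EuclideanSpace ℂ κ) : EuclideanSpace ℂ (ι × κ) :=
  (EuclideanSpace.equiv (ι × κ) ℂ).symm fun p => x p.1 * z p.2

variable {ιV ιW : Type*} [Fintype ιV] [DecidableEq ιV] [Fintype ιW] [DecidableEq ιW]

/-- The matrix `|u⟩⟨u|` of the orthogonal projection `P_u` onto `ℂ ∙ u`
(for a unit vector `u`). -/
def PuM (u : EuclideanSpace ℂ ιV) : Matrix ιV ιV ℂ :=
  Matrix.of fun i j => u i * star (u j)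

/-- The matrix of `U_y = ω_N^y • P_u + (id - P_u)` on `V`. -/
def UyM (N : ℕ) (u : EuclideanSpace ℂ ιV) (y : Fin N) : Matrix ιV ιV ℂ :=
  ω N ^ (y : ℕ) • PuM u + (1 - PuM u)

/-- The matrix of the controlled unitary `cU_y = |0⟩⟨0| ⊗ id_V + |1⟩⟨1| ⊗ U_y` on `ℂ² ⊗ V`. -/
def cUyM (N : ℕ) (u : EuclideanSpace ℂ ιV) (y : Fin N) : Matrix (Fin 2 × ιV) (Fin 2 × ιV) ℂ :=
  Matrix.single 0 0 (1 : ℂ) ⊗ₖ (1 : Matrix ιV ιV ℂ)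
    + Matrix.single 1 1 (1 : ℂ) ⊗ₖ UyM N u y

/-- The matrix of the coherent oracle `c𝔘 = ∑_y (cU_y ⊗ id_W) ⊗ |e_y⟩⟨e_y|` on
`H ⊗ EuclideanSpace ℂ (Fin N)`, where `H = ℂ² ⊗ V ⊗ W`. -/
def oracleM (N : ℕ) (u : EuclideanSpace ℂ ιV) (ιW : Type*) [Fintype ιW] [DecidableEq ιW] :
    Matrix (((Fin 2 × ιV) × ιW) × Fin N) (((Fin 2 × ιV) × ιW) × Fin N) ℂ :=
  ∑ y : Fin N, (cUyM N u y ⊗ₖ (1 : Matrix ιW ιW ℂ)) ⊗ₖ Matrix.single y y (1 : ℂ)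

end

/-! Writing `Π = |1⟩⟨1| ⊗ P_u`, we have `cU_y = (1 - Π) + ω^y • Π`, so `c𝔘` is block diagonal in
the position register with blocks affine in `ω^y`. Multiplying the coordinates of `k̂` by `ω^y`
gives `(k+1)̂`, hence `c𝔘 (x ⊗ k̂) = ((1 - Π) ⊗ 1) x ⊗ k̂ + (Π ⊗ 1) x ⊗ (k+1)̂`, while `A ⊗ id`
never touches the Fourier register. -/

open Matrix

noncomputable section

lemma tp_apply {ι κ : Type*} [Fintype ι] [Fintype κ] (x : EuclideanSpace ℂ ι)
    (z : EuclideanSpace ℂ κ) (p : ι × κ) :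
    tp x z p = x p.1 * z p.2 := rfl

lemma sum_kronecker_single_eq_blockDiagonal {ι ι' κ α : Type*} [Fintype κ] [DecidableEq κ]
    [Semiring α] (B : κ → Matrix ι ι' α) :
    ∑ y, B y ⊗ₖ single y y (1 : α) = blockDiagonal B := by
  ext ⟨i, j⟩ ⟨i', j'⟩
  simp [Matrix.sum_apply, blockDiagonal_apply', single_apply, ite_and]

section Kronecker

variable {ι ι' κ : Type*} [Fintype ι'] [DecidableEq ι'] [Fintype κ] [DecidableEq κ]

lemma toEuclideanLin_kronecker_one_tp [Fintype ι] (M : Matrix ι ι' ℂ)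
    (x : EuclideanSpace ℂ ι') (z : EuclideanSpace ℂ κ) :
    toEuclideanLin (M ⊗ₖ (1 : Matrix κ κ ℂ)) (tp x z) = tp (toEuclideanLin M x) z := by
  ext ⟨i, j⟩
  simp only [tp_apply, toLpLin_apply, mulVec, dotProduct, Fintype.sum_prod_type,
    kroneckerMap_apply, one_apply]
  simp [Finset.sum_mul, mul_assoc]

lemma toEuclideanLin_blockDiagonal_tp (B : κ → Matrix ι ι' ℂ) (x : EuclideanSpace ℂ ι')
    (z : EuclideanSpace ℂ κ) (p : ι × κ) :
    toEuclideanLin (blockDiagonal B) (tp x z) p = toEuclideanLin (B p.2) x p.1 * z p.2 := by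
  obtain ⟨i, j⟩ := p
  simp only [tp_apply, toLpLin_apply, mulVec, dotProduct, Fintype.sum_prod_type,
    blockDiagonal_apply']
  simp [Finset.sum_mul, mul_assoc]

end Kronecker

section Fourier

variable {N : ℕ}

lemma fHat_apply (k j : Fin N) :
    fHat N k j = (Real.sqrt N : ℂ)⁻¹ * ω N ^ ((k : ℕ) * (j : ℕ)) := by
  simp [fHat, e, Complex.real_smul, Pi.single_apply]

lemma fHat_succ_apply (k j : Fin N) (hk : (k : ℕ) + 1 < N) :
    fHat N ⟨k + 1, hk⟩ j = ω N ^ (j : ℕ) * fHat N k j := by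
  simp only [fHat_apply, add_mul, one_mul, pow_add]
  ring

end Fourier

def phaseOracle {ι ι' : Type*} (N : ℕ) (D C : Matrix ι ι' ℂ) :
    Matrix (ι × Fin N) (ι' × Fin N) ℂ :=
  blockDiagonal fun y => D + ω N ^ (y : ℕ) • C

def fourierTensorSpan (ι : Type*) [Fintype ι] (N q : ℕ) :
    Submodule ℂ (EuclideanSpace ℂ (ι × Fin N)) :=
  Submodule.span ℂ
    {z | ∃ (x : EuclideanSpace ℂ ι) (k : Fin N), (k : ℕ) ≤ q ∧ z = tp x (fHat N k)}

section PhaseOracle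

variable {ι ι' : Type*} [Fintype ι] [Fintype ι'] [DecidableEq ι'] {N : ℕ}

lemma tp_fHat_mem_fourierTensorSpan (x : EuclideanSpace ℂ ι) {q : ℕ} (k : Fin N)
    (hk : (k : ℕ) ≤ q) : tp x (fHat N k) ∈ fourierTensorSpan ι N q :=
  Submodule.subset_span ⟨x, k, hk, rfl⟩

lemma phaseOracle_tp_fHat (D C : Matrix ι ι' ℂ) (x : EuclideanSpace ℂ ι') (k : Fin N)
    (hk : (k : ℕ) + 1 < N) :
    toEuclideanLin (phaseOracle N D C) (tp x (fHat N k))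
      = tp (toEuclideanLin D x) (fHat N k) + tp (toEuclideanLin C x) (fHat N ⟨k + 1, hk⟩) := by
  ext ⟨i, j⟩
  rw [phaseOracle, toEuclideanLin_blockDiagonal_tp, PiLp.add_apply, tp_apply, tp_apply,
    fHat_succ_apply]
  simp only [map_add, map_smul, LinearMap.add_apply, LinearMap.smul_apply, PiLp.add_apply,
    PiLp.smul_apply, smul_eq_mul]
  ring

lemma phaseOracle_mem_fourierTensorSpan_succ (D C : Matrix ι ι' ℂ) {q : ℕ} (hq : q + 1 < N)
    {ψ : EuclideanSpace ℂ (ι' × Fin N)} (hψ : ψ ∈ fourierTensorSpan ι' N q) :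
    toEuclideanLin (phaseOracle N D C) ψ ∈ fourierTensorSpan ι N (q + 1) := by
  refine (Submodule.map_span_le _ _ _).mpr ?_ (Submodule.mem_map_of_mem hψ)
  rintro _ ⟨x, k, hk, rfl⟩
  rw [phaseOracle_tp_fHat D C x k (by omega)]
  exact Submodule.add_mem _ (tp_fHat_mem_fourierTensorSpan _ k (by omega))
    (tp_fHat_mem_fourierTensorSpan _ _ (by simpa using hk))

end PhaseOracle

lemma toEuclideanLin_kronecker_one_mem_fourierTensorSpan {ι : Type*} [Fintype ι]
    [DecidableEq ι] {N q : ℕ} (A : Matrix ι ι ℂ) {ψ : EuclideanSpace ℂ (ι × Fin N)}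
    (hψ : ψ ∈ fourierTensorSpan ι N q) :
    toEuclideanLin (A ⊗ₖ (1 : Matrix (Fin N) (Fin N) ℂ)) ψ ∈ fourierTensorSpan ι N q := by
  refine (Submodule.map_span_le _ _ _).mpr ?_ (Submodule.mem_map_of_mem hψ)
  rintro _ ⟨x, k, hk, rfl⟩
  rw [toEuclideanLin_kronecker_one_tp]
  exact tp_fHat_mem_fourierTensorSpan _ k hk

def ctrlPuM {ιV : Type*} (u : EuclideanSpace ℂ ιV) : Matrix (Fin 2 × ιV) (Fin 2 × ιV) ℂ :=
  single 1 1 (1 : ℂ) ⊗ₖ PuM u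

lemma cUyM_eq {ιV : Type*} [DecidableEq ιV] (N : ℕ) (u : EuclideanSpace ℂ ιV) (y : Fin N) :
    cUyM N u y = (1 - ctrlPuM u) + ω N ^ (y : ℕ) • ctrlPuM u := by
  have hid : (single 0 0 (1 : ℂ) + single 1 1 1 : Matrix (Fin 2) (Fin 2) ℂ) = 1 := by
    ext i j; fin_cases i <;> fin_cases j <;> simp
  have hsub : single 1 1 (1 : ℂ) ⊗ₖ (1 - PuM u) = single 1 1 1 ⊗ₖ 1 - ctrlPuM u :=
    eq_sub_of_add_eq (by rw [ctrlPuM, ← kronecker_add, sub_add_cancel])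
  rw [cUyM, UyM, kronecker_add, kronecker_smul, hsub, ← ctrlPuM, ← one_kronecker_one, ← hid,
    add_kronecker]
  abel

lemma oracleM_eq_phaseOracle {ιV : Type*} [Fintype ιV] [DecidableEq ιV] (N : ℕ)
    (u : EuclideanSpace ℂ ιV) (ιW : Type*) [Fintype ιW] [DecidableEq ιW] :
    oracleM N u ιW = phaseOracle N ((1 - ctrlPuM u) ⊗ₖ (1 : Matrix ιW ιW ℂ))
      (ctrlPuM u ⊗ₖ (1 : Matrix ιW ιW ℂ)) := by
  rw [oracleM, phaseOracle, ← sum_kronecker_single_eq_blockDiagonal]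
  simp only [cUyM_eq, add_kronecker, smul_kronecker]

theorem stmt_6_general {ιV ιW : Type*} [Fintype ιV] [DecidableEq ιV] [Fintype ιW] [DecidableEq ιW]
    {N : ℕ} (u : EuclideanSpace ℂ ιV)
    {q : ℕ} (hq : q + 2 ≤ N)
    (A : Matrix ((Fin 2 × ιV) × ιW) ((Fin 2 × ιV) × ιW) ℂ)
    (ψ : EuclideanSpace ℂ (((Fin 2 × ιV) × ιW) × Fin N))
    (hψ : ψ ∈ Submodule.span ℂ
      {z | ∃ (x : EuclideanSpace ℂ ((Fin 2 × ιV) × ιW)) (k : Fin N),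
        (k : ℕ) ≤ q ∧ z = tp x (fHat N k)}) :
    Matrix.toEuclideanLin ((A ⊗ₖ (1 : Matrix (Fin N) (Fin N) ℂ)) * oracleM N u ιW) ψ
      ∈ Submodule.span ℂ
        {z | ∃ (x : EuclideanSpace ℂ ((Fin 2 × ιV) × ιW)) (k : Fin N),
          (k : ℕ) ≤ q + 1 ∧ z = tp x (fHat N k)} := by
  rw [toLpLin_mul_same, LinearMap.comp_apply, oracleM_eq_phaseOracle]
  exact toEuclideanLin_kronecker_one_mem_fourierTensorSpan A
    (phaseOracle_mem_fourierTensorSpan_succ _ _ (by omega) hψ)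

/-- With `H = ℂ² ⊗ V ⊗ W` and `F_q` the span of the Fourier basis vectors `k̂` with `k ≤ q`,
for every `0 ≤ q ≤ N-2` and every unitary `A` on `H`, the operator `(A ⊗ id) ∘ c𝔘` maps
the subspace `H ⊗ F_q` into `H ⊗ F_{q+1}`. -/
theorem stmt_6 {ιV ιW : Type*} [Fintype ιV] [DecidableEq ιV] [Fintype ιW] [DecidableEq ιW]
    {N : ℕ} [NeZero N] (u : EuclideanSpace ℂ ιV) (hu : ‖u‖ = 1)
    {q : ℕ} (hq : q + 2 ≤ N)
    (A : Matrix ((Fin 2 × ιV) × ιW) ((Fin 2 × ιV) × ιW) ℂ)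
    (hA : A ∈ Matrix.unitaryGroup ((Fin 2 × ιV) × ιW) ℂ)
    (ψ : EuclideanSpace ℂ (((Fin 2 × ιV) × ιW) × Fin N))
    (hψ : ψ ∈ Submodule.span ℂ
      {z | ∃ (x : EuclideanSpace ℂ ((Fin 2 × ιV) × ιW)) (k : Fin N),
        (k : ℕ) ≤ q ∧ z = tp x (fHat N k)}) :
    Matrix.toEuclideanLin ((A ⊗ₖ (1 : Matrix (Fin N) (Fin N) ℂ)) * oracleM N u ιW) ψ
      ∈ Submodule.span ℂ
        {z | ∃ (x : EuclideanSpace ℂ ((Fin 2 × ιV) × ιW)) (k : Fin N),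
          (k : ℕ) ≤ q + 1 ∧ z = tp x (fHat N k)} :=
  stmt_6_general u hq A ψ hψ

end
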